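/- Let {c_n}_{n≥1} be a complex sequence satisfying condition (2*): there exist a natural number N₀ ≥ 1 and a constant M > 0 such that for every m ≥ 1, ∑_{n=m}^{2m} |c_n − c_{n+1}| ≤ M · max_{m ≤ n < m+N₀} |c_n|. Suppose also that lim_{n→∞} c_n = 0 and that for some N ≥ N₀ and ε > 0 one has k·|c_k| ≤ ε for all k ≥ N. Then ∑_{k=N}^{∞} |c_k − c_{k+1}| ≤ C·ε/N, where C > 0 is a constant depending only on M (in particular C = 2M works). -/

import Mathlib

open Filter Finset

/-- Estimate (12) in the proof of Theorem 1 of the paper: under condition (2*),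
if `c` is a null sequence with `k·|c_k| ≤ ε` for all `k ≥ N` (where `N ≥ N₀`),
then `∑_{k=N}^∞ |c_k − c_{k+1}| ≤ 2M·ε/N`. -/
theorem estimate12 (c : ℕ → ℂ) (N₀ : ℕ) (hN₀ : 1 ≤ N₀) (M : ℝ) (hM : 0 < M)
    (h2star : ∀ m : ℕ, 1 ≤ m →
      ∑ n ∈ Finset.Icc m (2 * m), ‖c n - c (n + 1)‖ ≤
        M * (Finset.Ico m (m + N₀)).sup' (Finset.nonempty_Ico.mpr (by omega))
          (fun n => ‖c n‖))
    (hc0 : Tendsto c atTop (nhds 0))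
    (N : ℕ) (hN : N₀ ≤ N) (ε : ℝ) (hε : 0 < ε)
    (hsmall : ∀ k : ℕ, N ≤ k → (k : ℝ) * ‖c k‖ ≤ ε) :
    Summable (fun k : ℕ => ‖c (N + k) - c (N + k + 1)‖) ∧
    ∑' k : ℕ, ‖c (N + k) - c (N + k + 1)‖ ≤ 2 * M * ε / N := by
  have hN1 : 1 ≤ N := le_trans hN₀ hN
  have hNpos : (0:ℝ) < N := by exact_mod_cast hN1
  set f : ℕ → ℝ := fun n => ‖c n - c (n + 1)‖ with hf
  have hf0 : ∀ n, 0 ≤ f n := fun n => norm_nonneg _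
  -- block estimate
  have block : ∀ j : ℕ, ∑ n ∈ Finset.Ico (2 ^ j * N) (2 ^ (j+1) * N), f n
      ≤ M * ε / (2 ^ j * N) := by
    intro j
    set m := 2 ^ j * N with hm
    have hm1 : 1 ≤ m := by
      have : 1 ≤ 2 ^ j := Nat.one_le_two_pow
      calc 1 = 1 * 1 := by ring
      _ ≤ 2 ^ j * N := Nat.mul_le_mul this hN1
    have hmr : (0:ℝ) < m := by exact_mod_cast hm1
    have hNm : N ≤ m := by
      calc N = 1 * N := (one_mul N).symm
      _ ≤ 2 ^ j * N := Nat.mul_le_mul_right N Nat.one_le_two_pow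
    have h1 : ∑ n ∈ Finset.Ico m (2 ^ (j+1) * N), f n ≤ ∑ n ∈ Finset.Icc m (2 * m), f n := by
      apply Finset.sum_le_sum_of_subset_of_nonneg
      · intro x hx
        simp only [Finset.mem_Ico] at hx
        simp only [Finset.mem_Icc]
        constructor
        · exact hx.1
        · have : 2 ^ (j+1) * N = 2 * m := by rw [hm]; ring
          omega
      · intro n _ _; exact hf0 n
    have h2 := h2star m hm1
    have h3 : (Finset.Ico m (m + N₀)).sup' (Finset.nonempty_Ico.mpr (by omega))
        (fun n => ‖c n‖) ≤ ε / m := by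
      apply Finset.sup'_le
      intro n hn
      simp only [Finset.mem_Ico] at hn
      have hn1 : N ≤ n := le_trans hNm hn.1
      have hnpos : (0:ℝ) < n := by
        have : 1 ≤ n := le_trans hm1 hn.1
        exact_mod_cast this
      have := hsmall n hn1
      have h4 : ‖c n‖ ≤ ε / n := by
        rw [le_div_iff₀ hnpos]; linarith [this]
      refine h4.trans ?_
      apply div_le_div_of_nonneg_left hε.le hmr
      exact_mod_cast hn.1
    calc ∑ n ∈ Finset.Ico m (2 ^ (j+1) * N), f n ≤ ∑ n ∈ Finset.Icc m (2 * m), f n := h1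
    _ ≤ M * ((Finset.Ico m (m + N₀)).sup' (Finset.nonempty_Ico.mpr (by omega))
          (fun n => ‖c n‖)) := h2
    _ ≤ M * (ε / m) := by
        apply mul_le_mul_of_nonneg_left h3 hM.le
    _ = M * ε / m := by ring
    _ = M * ε / (2 ^ j * N) := by push_cast [hm]; ring
  -- partial sums over dyadic ranges
  have partial_bound : ∀ J : ℕ, ∑ n ∈ Finset.Ico N (2 ^ J * N), f n ≤ 2 * M * ε / N := by
    intro J
    have split : ∑ n ∈ Finset.Ico N (2 ^ J * N), f n
        = ∑ j ∈ Finset.range J, ∑ n ∈ Finset.Ico (2 ^ j * N) (2 ^ (j+1) * N), f n := by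
      induction J with
      | zero => simp
      | succ J ih =>
        rw [Finset.sum_range_succ, ← ih]
        rw [Finset.sum_Ico_consecutive]
        · calc N = 1 * N := (one_mul N).symm
          _ ≤ 2 ^ J * N := Nat.mul_le_mul_right N Nat.one_le_two_pow
        · exact Nat.mul_le_mul_right N (Nat.pow_le_pow_right (by norm_num) (by omega))
    rw [split]
    have step : ∑ j ∈ Finset.range J, ∑ n ∈ Finset.Ico (2 ^ j * N) (2 ^ (j+1) * N), f n
        ≤ ∑ j ∈ Finset.range J, M * ε / (2 ^ j * N) :=
      Finset.sum_le_sum (fun j _ => block j)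
    refine step.trans ?_
    have eq1 : ∀ j ∈ Finset.range J, M * ε / ((2:ℝ) ^ j * N) = (M * ε / N) * (1/2) ^ j := by
      intro j _
      have h2j : ((2:ℝ)) ^ j ≠ 0 := by positivity
      field_simp
      rw [← mul_pow]; norm_num
    rw [Finset.sum_congr rfl eq1, ← Finset.mul_sum]
    have geo : ∑ j ∈ Finset.range J, ((1:ℝ)/2) ^ j ≤ 2 := by
      have h := geom_sum_eq (show (1/2:ℝ) ≠ 1 by norm_num) J
      rw [h]
      have e : ((1/2:ℝ) ^ J - 1) / (1/2 - 1) = 2 - 2 * (1/2) ^ J := by ring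
      have : (0:ℝ) ≤ (1/2:ℝ) ^ J := by positivity
      linarith [e]
    have hMεN : 0 ≤ M * ε / N := by positivity
    calc M * ε / N * ∑ j ∈ Finset.range J, ((1:ℝ)/2) ^ j ≤ M * ε / N * 2 :=
          mul_le_mul_of_nonneg_left geo hMεN
    _ = 2 * M * ε / N := by ring
  -- bound on all partial sums of shifted sequence
  have main : ∀ K : ℕ, ∑ k ∈ Finset.range K, f (N + k) ≤ 2 * M * ε / N := by
    intro K
    have e1 : ∑ k ∈ Finset.range K, f (N + k) = ∑ n ∈ Finset.Ico N (N + K), f n := by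
      rw [Finset.sum_Ico_eq_sum_range]
      simp
    rw [e1]
    have hsub : Finset.Ico N (N + K) ⊆ Finset.Ico N (2 ^ K * N) := by
      apply Finset.Ico_subset_Ico le_rfl
      have h1 : K + 1 ≤ 2 ^ K := Nat.lt_two_pow_self (n := K)
      calc N + K ≤ N + K * N := by nlinarith [hN1]
      _ = (K + 1) * N := by ring
      _ ≤ 2 ^ K * N := Nat.mul_le_mul_right N h1
    calc ∑ n ∈ Finset.Ico N (N + K), f n ≤ ∑ n ∈ Finset.Ico N (2 ^ K * N), f n :=
          Finset.sum_le_sum_of_subset_of_nonneg hsub (fun n _ _ => hf0 n)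
    _ ≤ 2 * M * ε / N := partial_bound K
  constructor
  · exact summable_of_sum_range_le (fun k => hf0 _) main
  · exact Summable.tsum_le_of_sum_range_le (summable_of_sum_range_le (fun k => hf0 _) main) main
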